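/- Let f ∈ ℝ and c > 0, and define G_c(z,w) := c²·(2f·z₁² + w₁²) + (z₁w₂ − z₂w₁)². Then: (i) G_c(z(t), z'(t)) is constant along every solution of the Hooke equation z'' = −2f·z; (ii) for every a > c and every point z on the ellipse {z₁²/a² + z₂²/(a²−c²) = 1}, the elastic reflection w' of any w ∈ ℝ² at this ellipse at z (with normal n = (z₁/a², z₂/(a²−c²))) satisfies G_c(z,w') = G_c(z,w); (iii) for every b with 0 < b < c and every point z on the hyperbola {z₁²/b² − z₂²/(c²−b²) = 1}, the elastic reflection w' of any w at this hyperbola at z (with normal n = (z₁/b², −z₂/(c²−b²))) satisfies G_c(z,w') = G_c(z,w). Hence G_c is a common first integral of the Hooke billiards whose walls are any combination of these confocal centered ellipses and hyperbolae (all with foci (±c,0)). -/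

import Mathlib

/-! At a fixed position `z`, the velocity part of `G_c` is the quadratic form with matrix
`[[c² + z₂², -z₁z₂], [-z₁z₂, z₁²]]`. A reflection in the line orthogonal to `n` preserves a
quadratic form whenever `n` is an eigenvector of its matrix, and the normal at `z` of any conic
confocal with foci `(±c, 0)` is such an eigenvector (with eigenvalue `c²z₁²/A` for the conic
`z₁²/A + z₂²/(A - c²) = 1`). Along the Hooke flow, `G_c` has derivative zero by a direct
computation. -/

/-- The first integral `G_c(z,w) = c²·(2f·z₁² + w₁²) + (z₁w₂ − z₂w₁)²` of Hooke billiards. -/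
def hookeGc (f c : ℝ) (z w : ℝ × ℝ) : ℝ :=
  c ^ 2 * (2 * f * z.1 ^ 2 + w.1 ^ 2) + (z.1 * w.2 - z.2 * w.1) ^ 2

def binaryQuadForm (p q r : ℝ) (v : ℝ × ℝ) : ℝ :=
  p * v.1 ^ 2 + 2 * q * v.1 * v.2 + r * v.2 ^ 2

/-- Elastic reflection of `w` at a wall with normal `n` (the identity when `n = 0`). -/
noncomputable def reflectAlong (n w : ℝ × ℝ) : ℝ × ℝ :=
  w - (2 * ((w.1 * n.1 + w.2 * n.2) / (n.1 ^ 2 + n.2 ^ 2))) • n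

lemma reflectAlong_coeff_mul (n w : ℝ × ℝ) :
    2 * ((w.1 * n.1 + w.2 * n.2) / (n.1 ^ 2 + n.2 ^ 2)) * (n.1 ^ 2 + n.2 ^ 2)
      = 2 * (w.1 * n.1 + w.2 * n.2) := by
  by_cases hn : n.1 ^ 2 + n.2 ^ 2 = 0
  · have h1 : n.1 = 0 := by nlinarith [sq_nonneg n.1, sq_nonneg n.2]
    have h2 : n.2 = 0 := by nlinarith [sq_nonneg n.1, sq_nonneg n.2]
    simp [h1, h2]
  · field_simp

lemma binaryQuadForm_reflectAlong_of_eigenvector {p q r μ : ℝ} {n : ℝ × ℝ}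
    (h₁ : p * n.1 + q * n.2 = μ * n.1) (h₂ : q * n.1 + r * n.2 = μ * n.2) (w : ℝ × ℝ) :
    binaryQuadForm p q r (reflectAlong n w) = binaryQuadForm p q r w := by
  set s := 2 * ((w.1 * n.1 + w.2 * n.2) / (n.1 ^ 2 + n.2 ^ 2))
  have hs : s * (n.1 ^ 2 + n.2 ^ 2) = 2 * (w.1 * n.1 + w.2 * n.2) := reflectAlong_coeff_mul n w
  simp only [binaryQuadForm, reflectAlong, Prod.fst_sub, Prod.snd_sub, Prod.smul_fst,
    Prod.smul_snd, smul_eq_mul]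
  linear_combination s * (-2 * w.1 + s * n.1) * h₁ + s * (-2 * w.2 + s * n.2) * h₂ + s * μ * hs

lemma hookeGc_eq_binaryQuadForm (f c : ℝ) (z w : ℝ × ℝ) :
    hookeGc f c z w = c ^ 2 * (2 * f * z.1 ^ 2)
      + binaryQuadForm (c ^ 2 + z.2 ^ 2) (-(z.1 * z.2)) (z.1 ^ 2) w := by
  simp only [hookeGc, binaryQuadForm]
  ring

/-- `z₁²/A + z₂²/(A - c²) = 1` is the conic with foci `(±c, 0)`: an ellipse for `A > c²`, a
hyperbola for `0 < A < c²`. -/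
lemma hookeGc_reflectAlong_confocal (f c A : ℝ) (hA : A ≠ 0) (hB : A - c ^ 2 ≠ 0)
    (z : ℝ × ℝ) (hz : z.1 ^ 2 / A + z.2 ^ 2 / (A - c ^ 2) = 1) (w : ℝ × ℝ) :
    hookeGc f c z (reflectAlong (z.1 / A, z.2 / (A - c ^ 2)) w) = hookeGc f c z w := by
  have hz' : z.1 ^ 2 * (A - c ^ 2) + z.2 ^ 2 * A = A * (A - c ^ 2) := by
    field_simp at hz
    linear_combination hz
  rw [hookeGc_eq_binaryQuadForm, hookeGc_eq_binaryQuadForm,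
    binaryQuadForm_reflectAlong_of_eigenvector (μ := c ^ 2 * z.1 ^ 2 / A)]
  · field_simp
    linear_combination (-(c ^ 2 * z.1)) * hz'
  · field_simp
    ring

lemma Convex.is_const_of_hasDerivWithinAt_zero {E : Type*} [NormedAddCommGroup E]
    [NormedSpace ℝ E] {I : Set ℝ} (hI : Convex ℝ I) {g : ℝ → E}
    (hg : ∀ t ∈ I, HasDerivWithinAt g 0 I t) {t t' : ℝ} (ht : t ∈ I) (ht' : t' ∈ I) :
    g t = g t' := by
  have h := hI.norm_image_sub_le_of_norm_hasDerivWithin_le hg (C := 0) (by simp) ht' ht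
  rw [zero_mul, norm_le_zero_iff, sub_eq_zero] at h
  exact h

lemma hasDerivWithinAt_hookeGc_of_hooke (f c : ℝ) {I : Set ℝ} {z v : ℝ → ℝ × ℝ} {t : ℝ}
    (hz : HasDerivWithinAt z (v t) I t) (hv : HasDerivWithinAt v ((-(2 * f)) • z t) I t) :
    HasDerivWithinAt (fun τ ↦ hookeGc f c (z τ) (v τ)) 0 I t := by
  have hz₁ : HasDerivWithinAt (fun τ ↦ (z τ).1) (v t).1 I t := by
    simpa using hz.hasFDerivWithinAt.fst.hasDerivWithinAt
  have hz₂ : HasDerivWithinAt (fun τ ↦ (z τ).2) (v t).2 I t := by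
    simpa using hz.hasFDerivWithinAt.snd.hasDerivWithinAt
  have hv₁ : HasDerivWithinAt (fun τ ↦ (v τ).1) (-(2 * f) * (z t).1) I t := by
    simpa using hv.hasFDerivWithinAt.fst.hasDerivWithinAt
  have hv₂ : HasDerivWithinAt (fun τ ↦ (v τ).2) (-(2 * f) * (z t).2) I t := by
    simpa using hv.hasFDerivWithinAt.snd.hasDerivWithinAt
  have h := ((((hz₁.pow 2).const_mul (2 * f)).add (hv₁.pow 2)).const_mul (c ^ 2)).add
    (((hz₁.mul hv₂).sub (hz₂.mul hv₁)).pow 2)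
  exact h.congr_deriv (by push_cast; ring)

/-- `G_c` is a common first integral of Hooke billiards whose walls are any combination
of confocal centered ellipses `z₁²/a² + z₂²/(a²−c²) = 1` (a > c) and hyperbolae
`z₁²/b² − z₂²/(c²−b²) = 1` (0 < b < c), all with foci `(±c, 0)`. -/
theorem stmt_5 (f c : ℝ) (hc : 0 < c) :
    (∀ I : Set ℝ, Convex ℝ I → ∀ z v : ℝ → ℝ × ℝ,
      (∀ t ∈ I, HasDerivWithinAt z (v t) I t) →
      (∀ t ∈ I, HasDerivWithinAt v ((-(2 * f)) • z t) I t) →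
      ∀ t ∈ I, ∀ t' ∈ I,
        hookeGc f c (z t) (v t) = hookeGc f c (z t') (v t')) ∧
    (∀ a : ℝ, c < a → ∀ z w : ℝ × ℝ,
      z.1 ^ 2 / a ^ 2 + z.2 ^ 2 / (a ^ 2 - c ^ 2) = 1 →
      ∀ n w' : ℝ × ℝ, n = (z.1 / a ^ 2, z.2 / (a ^ 2 - c ^ 2)) →
      w' = w - (2 * ((w.1 * n.1 + w.2 * n.2) / (n.1 ^ 2 + n.2 ^ 2))) • n →
      hookeGc f c z w' = hookeGc f c z w) ∧
    (∀ b : ℝ, 0 < b → b < c → ∀ z w : ℝ × ℝ,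
      z.1 ^ 2 / b ^ 2 - z.2 ^ 2 / (c ^ 2 - b ^ 2) = 1 →
      ∀ n w' : ℝ × ℝ, n = (z.1 / b ^ 2, -z.2 / (c ^ 2 - b ^ 2)) →
      w' = w - (2 * ((w.1 * n.1 + w.2 * n.2) / (n.1 ^ 2 + n.2 ^ 2))) • n →
      hookeGc f c z w' = hookeGc f c z w) := by
  refine ⟨?flow, ?ellipse, ?hyperbola⟩
  case flow =>
    intro I hI z v hz hv t ht t' ht'
    exact hI.is_const_of_hasDerivWithinAt_zero
      (fun s hs ↦ hasDerivWithinAt_hookeGc_of_hooke f c (hz s hs) (hv s hs)) ht ht'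
  case ellipse =>
    rintro a hca z w hz n w' rfl rfl
    have hca2 : c ^ 2 < a ^ 2 := pow_lt_pow_left₀ hca hc.le two_ne_zero
    exact hookeGc_reflectAlong_confocal f c (a ^ 2) (pow_pos (hc.trans hca) 2).ne'
      (sub_pos.2 hca2).ne' z hz w
  case hyperbola =>
    rintro b hb hbc z w hz n w' rfl rfl
    have hbc2 : b ^ 2 < c ^ 2 := pow_lt_pow_left₀ hbc hb.le two_ne_zero
    have hflip : ∀ x : ℝ, x / (c ^ 2 - b ^ 2) = -x / (b ^ 2 - c ^ 2) := fun x ↦ by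
      rw [← neg_sub, div_neg, neg_div]
    have hz' : z.1 ^ 2 / b ^ 2 + z.2 ^ 2 / (b ^ 2 - c ^ 2) = 1 := by
      rwa [hflip, neg_div, sub_neg_eq_add] at hz
    rw [hflip, neg_neg]
    exact hookeGc_reflectAlong_confocal f c (b ^ 2) (pow_pos hb 2).ne'
      (sub_neg.2 hbc2).ne z hz' w
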